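/- arXiv:math/0310028 — 2 statements merged into one kernel-verified Lean document; each statement's English description precedes it below -/
import Mathlib

section
/- Let S be a semiring, μ : Σ_r^* → S^{n×n} a monoid morphism, and β̃ : {b,c}^* → S^{rn×rn} the second embedding. Then there exists a nonempty word w ∈ Σ_r^+ with μ(w) = 0 if and only if there exists a nonempty word v ∈ {b,c}^+ with β̃(v) = 0. -/
/-!
Write `C` for the block cyclic shift. Conjugation by `C` rotates the blocks of a block diagonal
matrix, so every `β̃(v)` has the form `diag(μ(ψ_1), …, μ(ψ_r)) · C^k`; as `C^r = 1`, `C` is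
invertible and `β̃(v) = 0` forces `μ(ψ_1) = 0`. Conversely, coding `a_i` as `b^i c b^(r-i)` turns
`w` into a word `w'` with `β̃(w') = diag(μ(σ^t w))_t`, `σ` the cyclic shift of letters, and
`(β̃(w') C)^r = diag(∏_j μ(σ^(t+j) w))_t · C^r` has the factor `μ(w) = 0` in every block.
-/

open Matrix

/-- The block cyclic shift matrix `[0, I_{(r-1)n}; I_n, 0]`. -/
def cycShift (S : Type*) [Semiring S] (r n : ℕ) :
    Matrix (Fin r × Fin n) (Fin r × Fin n) S :=
  Matrix.of fun p q => if (q.1 : ℕ) = ((p.1 : ℕ) + 1) % r ∧ p.2 = q.2 then 1 else 0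

/-- The block diagonal matrix `diag(U_1, …, U_r)`. -/
def diagBlk {S : Type*} [Semiring S] {r n : ℕ}
    (U : Fin r → Matrix (Fin n) (Fin n) S) :
    Matrix (Fin r × Fin n) (Fin r × Fin n) S :=
  Matrix.of fun p q => if p.1 = q.1 then U p.1 p.2 q.2 else 0

/-- The second embedding `β̃ : {b,c}^* → S^{rn×rn}`, `b = 0 ↦` block cyclic
shift, `c = 1 ↦ diag(μ(a_1), …, μ(a_r))`. -/
def secondEmb {S : Type*} [Semiring S] {r n : ℕ}
    (μ : FreeMonoid (Fin r) →* Matrix (Fin n) (Fin n) S) :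
    FreeMonoid (Fin 2) →* Matrix (Fin r × Fin n) (Fin r × Fin n) S :=
  FreeMonoid.lift fun x =>
    if x = 0 then cycShift S r n else diagBlk fun i => μ (FreeMonoid.of i)

open Fin.NatCast

section
variable {S : Type*} [Semiring S] {r n : ℕ}

lemma diagBlk_eq_submatrix_blockDiagonal (U : Fin r → Matrix (Fin n) (Fin n) S) :
    diagBlk U = (blockDiagonal U).submatrix (Equiv.prodComm _ _) (Equiv.prodComm _ _) := by
  ext ⟨i, a⟩ ⟨j, b⟩
  simp [diagBlk, blockDiagonal_apply]

lemma diagBlk_mul (A B : Fin r → Matrix (Fin n) (Fin n) S) :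
    diagBlk A * diagBlk B = diagBlk fun t => A t * B t := by
  simp only [diagBlk_eq_submatrix_blockDiagonal]
  rw [submatrix_mul_equiv _ _ _ (Equiv.prodComm _ _), ← blockDiagonal_mul]

lemma diagBlk_one : diagBlk (fun _ : Fin r => (1 : Matrix (Fin n) (Fin n) S)) = 1 := by
  rw [diagBlk_eq_submatrix_blockDiagonal, ← Pi.one_def, blockDiagonal_one, submatrix_one_equiv]

lemma diagBlk_zero : diagBlk (fun _ : Fin r => (0 : Matrix (Fin n) (Fin n) S)) = 0 := by
  ext; simp [diagBlk]

lemma eq_zero_of_diagBlk_eq_zero {U : Fin r → Matrix (Fin n) (Fin n) S} (h : diagBlk U = 0)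
    (i : Fin r) : U i = 0 := by
  ext a b
  simpa [diagBlk] using congr_fun₂ h (i, a) (i, b)

lemma secondEmb_of_zero (μ : FreeMonoid (Fin r) →* Matrix (Fin n) (Fin n) S) :
    secondEmb μ (FreeMonoid.of 0) = cycShift S r n := by
  simp [secondEmb]

lemma secondEmb_of_one (μ : FreeMonoid (Fin r) →* Matrix (Fin n) (Fin n) S) :
    secondEmb μ (FreeMonoid.of 1) = diagBlk fun i => μ (FreeMonoid.of i) := by
  simp [secondEmb]

variable [NeZero r]

def cycShiftPerm (r n : ℕ) [NeZero r] : Equiv.Perm (Fin r × Fin n) :=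
  Equiv.prodCongr (Equiv.addRight 1) (Equiv.refl _)

lemma cycShift_eq_permMatrix : cycShift S r n = (cycShiftPerm r n).permMatrix S := by
  ext p q
  simp [cycShift, cycShiftPerm, PEquiv.toMatrix_apply, Prod.ext_iff, Fin.ext_iff, Fin.val_add,
    eq_comm]

lemma cycShift_pow (k : ℕ) : cycShift S r n ^ k = (cycShiftPerm r n ^ k).permMatrix S := by
  induction k with
  | zero => simp
  | succ k ih => rw [pow_succ', ih, pow_succ, permMatrix_mul, cycShift_eq_permMatrix]

lemma cycShiftPerm_pow_apply (k : ℕ) (p : Fin r × Fin n) :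
    (cycShiftPerm r n ^ k) p = (p.1 + k, p.2) := by
  induction k with
  | zero => simp
  | succ k ih => rw [pow_succ', Equiv.Perm.mul_apply, ih]; simp [cycShiftPerm, add_assoc]

lemma cycShift_pow_card : cycShift S r n ^ r = 1 := by
  have : cycShiftPerm r n ^ r = 1 := Equiv.ext fun p => by simp [cycShiftPerm_pow_apply]
  rw [cycShift_pow, this, permMatrix_one]

lemma isUnit_cycShift : IsUnit (cycShift S r n) :=
  .of_pow_eq_one cycShift_pow_card (NeZero.ne r)

lemma cycShift_mul_diagBlk (A : Fin r → Matrix (Fin n) (Fin n) S) :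
    cycShift S r n * diagBlk A = diagBlk (fun t => A (t + 1)) * cycShift S r n := by
  rw [cycShift_eq_permMatrix, PEquiv.toMatrix_toPEquiv_mul, PEquiv.mul_toMatrix_toPEquiv]
  ext p q
  simp [diagBlk, cycShiftPerm, eq_add_neg_iff_add_eq]

lemma cycShift_pow_mul_diagBlk (A : Fin r → Matrix (Fin n) (Fin n) S) (k : ℕ) :
    cycShift S r n ^ k * diagBlk A =
      diagBlk (fun t => A (t + (k : Fin r))) * cycShift S r n ^ k := by
  induction k generalizing A with
  | zero => simp
  | succ k ih =>
    rw [pow_succ, mul_assoc, cycShift_mul_diagBlk, ← mul_assoc, ih, mul_assoc, ← pow_succ]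
    simp [add_assoc]

lemma diagBlk_mul_cycShift_pow (d : Fin r → Matrix (Fin n) (Fin n) S) (k : ℕ) :
    (diagBlk d * cycShift S r n) ^ k =
      diagBlk (fun t => ((List.range k).map fun j : ℕ => d (t + (j : Fin r))).prod) *
        cycShift S r n ^ k := by
  induction k with
  | zero => simp [diagBlk_one]
  | succ k ih =>
    rw [pow_succ, ih, mul_assoc, ← mul_assoc (_ ^ k), cycShift_pow_mul_diagBlk, mul_assoc,
      ← pow_succ, ← mul_assoc, diagBlk_mul]
    simp [List.range_succ]

lemma diagBlk_mul_cycShift_pow_card_eq_zero {d : Fin r → Matrix (Fin n) (Fin n) S}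
    (hd : d 0 = 0) : (diagBlk d * cycShift S r n) ^ r = 0 := by
  have hprod : ∀ t : Fin r, ((List.range r).map fun j : ℕ => d (t + (j : Fin r))).prod = 0 :=
    fun t => List.prod_eq_zero <| List.mem_map.2
      ⟨((-t : Fin r) : ℕ), List.mem_range.2 (-t).isLt,
        by rw [Fin.cast_val_eq_self, add_neg_cancel, hd]⟩
  rw [diagBlk_mul_cycShift_pow, funext hprod, diagBlk_zero, zero_mul]

variable (μ : FreeMonoid (Fin r) →* Matrix (Fin n) (Fin n) S)

def encLetter (r : ℕ) [NeZero r] (i : Fin r) : FreeMonoid (Fin 2) :=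
  FreeMonoid.of 0 ^ (i : ℕ) * FreeMonoid.of 1 * FreeMonoid.of 0 ^ (r - i)

lemma secondEmb_encLetter (i : Fin r) :
    secondEmb μ (encLetter r i) = diagBlk fun t => μ (FreeMonoid.of (t + i)) := by
  rw [encLetter, map_mul, map_mul, map_pow, map_pow, secondEmb_of_zero, secondEmb_of_one,
    cycShift_pow_mul_diagBlk, mul_assoc, ← pow_add, Nat.add_sub_cancel' i.isLt.le,
    cycShift_pow_card, mul_one]
  simp [Fin.cast_val_eq_self]

lemma secondEmb_lift_encLetter (w : FreeMonoid (Fin r)) :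
    secondEmb μ (FreeMonoid.lift (encLetter r) w) =
      diagBlk fun t => μ (FreeMonoid.map (t + ·) w) := by
  induction w using FreeMonoid.inductionOn' with
  | one => simp [diagBlk_one]
  | of_mul i w ih =>
    rw [map_mul, map_mul, FreeMonoid.lift_eval_of, secondEmb_encLetter, ih, diagBlk_mul]
    simp

lemma exists_secondEmb_eq_diagBlk_mul_cycShift_pow (v : FreeMonoid (Fin 2)) :
    ∃ (ψ : Fin r → FreeMonoid (Fin r)) (k : ℕ),
      secondEmb μ v = diagBlk (fun t => μ (ψ t)) * cycShift S r n ^ k := by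
  induction v using FreeMonoid.inductionOn' with
  | one => exact ⟨fun _ => 1, 0, by simp [diagBlk_one]⟩
  | of_mul x v ih =>
    obtain ⟨ψ, k, hv⟩ := ih
    rw [map_mul, hv]
    obtain rfl | rfl : x = 0 ∨ x = 1 := by omega
    · refine ⟨fun t => ψ (t + 1), k + 1, ?_⟩
      rw [secondEmb_of_zero, ← mul_assoc, cycShift_mul_diagBlk, mul_assoc, ← pow_succ']
    · refine ⟨fun t => FreeMonoid.of t * ψ t, k, ?_⟩
      rw [secondEmb_of_one, ← mul_assoc, diagBlk_mul]
      simp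

lemma exists_secondEmb_eq_zero_of_map_eq_zero {w : FreeMonoid (Fin r)} (hw : μ w = 0) :
    ∃ v : FreeMonoid (Fin 2), v ≠ 1 ∧ secondEmb μ v = 0 := by
  refine ⟨(FreeMonoid.lift (encLetter r) w * FreeMonoid.of 0) ^ r, fun h => ?_, ?_⟩
  · have := congrArg FreeMonoid.length ((IsUnit.of_pow_eq_one h (NeZero.ne r)).eq_one)
    simp [FreeMonoid.length_mul] at this
  · rw [map_pow, map_mul, secondEmb_lift_encLetter, secondEmb_of_zero]
    refine diagBlk_mul_cycShift_pow_card_eq_zero ?_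
    simp only [zero_add]
    rwa [← Function.id_def, FreeMonoid.map_id, MonoidHom.id_apply]

lemma exists_map_eq_zero_of_secondEmb_eq_zero {v : FreeMonoid (Fin 2)}
    (hv : secondEmb μ v = 0) : ∃ w : FreeMonoid (Fin r), w ≠ 1 ∧ μ w = 0 := by
  obtain ⟨ψ, k, hψ⟩ := exists_secondEmb_eq_diagBlk_mul_cycShift_pow μ v
  have hψ0 : μ (ψ 0) = 0 :=
    eq_zero_of_diagBlk_eq_zero ((isUnit_cycShift.pow k).mul_left_eq_zero.1 (hψ ▸ hv)) 0
  by_cases h1 : ψ 0 = 1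
  · -- `μ 1 = 0`: the matrix ring is trivial
    rw [h1, map_one] at hψ0
    exact ⟨FreeMonoid.of 0, FreeMonoid.of_ne_one _, by rw [← mul_one (μ _), hψ0, mul_zero]⟩
  · exact ⟨ψ 0, h1, hψ0⟩

end

theorem mortality_r_to_two_general {S : Type*} [Semiring S] {r n : ℕ} [NeZero r]
    (μ : FreeMonoid (Fin r) →* Matrix (Fin n) (Fin n) S) :
    (∃ w : FreeMonoid (Fin r), w ≠ 1 ∧ μ w = 0) ↔
    (∃ v : FreeMonoid (Fin 2), v ≠ 1 ∧ secondEmb μ v = 0) :=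
  ⟨fun ⟨_, _, hw⟩ => exists_secondEmb_eq_zero_of_map_eq_zero μ hw,
    fun ⟨_, _, hv⟩ => exists_map_eq_zero_of_secondEmb_eq_zero μ hv⟩

/-- Mortality reduction (Blondel–Tsitsiklis / Cassaigne–Karhumäki), over any
semiring: some nonempty word `w ∈ Σ_r^+` satisfies `μ(w) = 0` iff some nonempty
word `v ∈ {b,c}^+` satisfies `β̃(v) = 0`. -/
theorem mortality_r_to_two {S : Type*} [Semiring S] {r n : ℕ} [NeZero r] [NeZero n]
    (μ : FreeMonoid (Fin r) →* Matrix (Fin n) (Fin n) S) :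
    (∃ w : FreeMonoid (Fin r), w ≠ 1 ∧ μ w = 0) ↔
    (∃ v : FreeMonoid (Fin 2), v ≠ 1 ∧ secondEmb μ v = 0) :=
  mortality_r_to_two_general μ
end

section
/- Let S be a semiring, μ : Σ_r^* → S^{n×n} a monoid morphism, α ∈ S^{1×n}, β ∈ S^{n×1}, γ ∈ S with γ ≠ 0, and n ≥ 1. Define μ' : Σ_{r+1}^* → S^{(n+2)×(n+2)} with μ'(a_i) = [0, αμ(a_i), αμ(a_i)β; 0, μ(a_i), μ(a_i)β; 0, 0, 0] for 1 ≤ i ≤ r, and μ'(a_{r+1}) = [1, 0, 0; 0, 0_{n×n}, 0; 0, 0, 1] (blocks of sizes 1, n, 1). Let M_γ be the matrix whose only nonzero entry is γ in position (1, n+2). Then there exists w ∈ Σ_r^+ with α μ(w) β = γ if and only if there exists z ∈ Σ_{r+1}^+ with μ'(z) = M_γ. -/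
open Matrix

/-- The `(n+2)×(n+2)` block matrix `[0, αX, αXβ; 0, X, Xβ; 0, 0, 0]`. -/
def cornerBlk {S : Type*} [Semiring S] {n : ℕ}
    (α : Matrix (Fin 1) (Fin n) S) (β : Matrix (Fin n) (Fin 1) S)
    (X : Matrix (Fin n) (Fin n) S) :
    Matrix ((Fin 1 ⊕ Fin n) ⊕ Fin 1) ((Fin 1 ⊕ Fin n) ⊕ Fin 1) S :=
  Matrix.fromBlocks (Matrix.fromBlocks 0 (α * X) 0 X)
    (Matrix.fromRows (α * X * β) (X * β)) 0 0

/-- Generator images for the reduction of scalar reachability to matrix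
reachability: letters `a_i` (`1 ≤ i ≤ r`) go to
`[0, αμ(a_i), αμ(a_i)β; 0, μ(a_i), μ(a_i)β; 0, 0, 0]` and the extra letter
`a_{r+1}` (here `Fin.last r`) to `diag(1, 0_{n×n}, 1)`. -/
def scalToMatGen {S : Type*} [Semiring S] {r n : ℕ}
    (μ : FreeMonoid (Fin r) →* Matrix (Fin n) (Fin n) S)
    (α : Matrix (Fin 1) (Fin n) S) (β : Matrix (Fin n) (Fin 1) S) :
    Fin (r + 1) → Matrix ((Fin 1 ⊕ Fin n) ⊕ Fin 1) ((Fin 1 ⊕ Fin n) ⊕ Fin 1) S := fun i =>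
  Fin.lastCases (Matrix.fromBlocks (Matrix.fromBlocks 1 0 0 0) 0 0 1)
    (fun j => cornerBlk α β (μ (FreeMonoid.of j))) i

/-- The matrix `M_γ` whose only (possibly) nonzero entry is `γ` in the top-right
corner (position `(1, n+2)`). -/
def cornerTarget {S : Type*} [Semiring S] (n : ℕ) (γ : S) :
    Matrix ((Fin 1 ⊕ Fin n) ⊕ Fin 1) ((Fin 1 ⊕ Fin n) ⊕ Fin 1) S :=
  Matrix.of fun i j =>
    if i = Sum.inl (Sum.inl 0) ∧ j = Sum.inr 0 then γ else 0

/-!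
For `w ≠ 1` the block `X ↦ cornerBlk α β X` is multiplicative, so `μ'(w) = cornerBlk α β (μ w)`.
Sandwiching it between two copies of `E = μ'(a_{r+1}) = diag(1, 0, 1)` kills every entry but the
corner `αμ(w)β`, which gives `μ'(a_{r+1} w a_{r+1}) = M_γ`.

Conversely, the corner entry of `μ'(z)` is the top entry of its last column `μ'(z) e_{n+2}`.
Applying the generators to `e_{n+2}` one letter at a time produces only four shapes of columns
(`LastColumnForm`), and the top entry of each is `0` or `αμ(w)β` for some `w ≠ 1`. As `γ ≠ 0`,
the second case must occur.
-/

theorem FreeMonoid.of_mul_ne_one {α : Type*} (a : α) (w : FreeMonoid α) :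
    FreeMonoid.of a * w ≠ 1 :=
  fun h => List.cons_ne_nil _ _ (congrArg FreeMonoid.toList h)

section ScalarToMatrix

variable {S : Type*} [Semiring S] {r n : ℕ}
  {μ : FreeMonoid (Fin r) →* Matrix (Fin n) (Fin n) S}
  {α : Matrix (Fin 1) (Fin n) S} {β : Matrix (Fin n) (Fin 1) S}

theorem cornerBlk_mul (X Y : Matrix (Fin n) (Fin n) S) :
    cornerBlk α β X * cornerBlk α β Y = cornerBlk α β (X * Y) := by
  simp [cornerBlk, fromBlocks_multiply, fromBlocks_mul_fromRows, Matrix.mul_assoc]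

theorem scalToMatGen_castSucc (j : Fin r) :
    scalToMatGen μ α β j.castSucc = cornerBlk α β (μ (.of j)) := by
  simp [scalToMatGen]

theorem scalToMatGen_last :
    scalToMatGen μ α β (Fin.last r) = fromBlocks (fromBlocks 1 0 0 0) 0 0 1 := by
  simp [scalToMatGen]

theorem lift_scalToMatGen_map_castSucc {w : FreeMonoid (Fin r)} (hw : w ≠ 1) :
    FreeMonoid.lift (scalToMatGen μ α β) (FreeMonoid.map Fin.castSucc w) =
      cornerBlk α β (μ w) := by
  cases w with
  | one => exact absurd rfl hw
  | of_mul j w =>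
    clear hw
    induction w using FreeMonoid.inductionOn' generalizing j with
    | one => simp [scalToMatGen_castSucc]
    | of_mul k w ih =>
      rw [map_mul, map_mul, ih, FreeMonoid.map_of, FreeMonoid.lift_eval_of,
        scalToMatGen_castSucc, cornerBlk_mul, ← map_mul]

theorem scalToMatGen_last_mul_cornerBlk_mul (X : Matrix (Fin n) (Fin n) S) :
    scalToMatGen μ α β (Fin.last r) * cornerBlk α β X * scalToMatGen μ α β (Fin.last r) =
      cornerTarget n ((α * X * β) 0 0) := by
  rw [scalToMatGen_last]
  ext ((i | i) | i) ((j | j) | j) <;>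
    simp [cornerBlk, cornerTarget, fromBlocks_multiply, fromBlocks_mul_fromRows,
      Fin.fin_one_eq_zero]

variable (S n) in
def lastBasisColumn : Matrix ((Fin 1 ⊕ Fin n) ⊕ Fin 1) (Fin 1) S :=
  fromRows 0 1

theorem mul_lastBasisColumn_apply {l : Type*} (M : Matrix l ((Fin 1 ⊕ Fin n) ⊕ Fin 1) S)
    (i : l) :
    (M * lastBasisColumn S n) i 0 = M i (.inr 0) := by
  simp [lastBasisColumn, mul_apply, Fintype.sum_sum_type]

variable (μ α β) in
/-- The last columns `μ'(z) e_{n+2}`: `basis` for `z ∈ a_{r+1}^*`, `word` for `z ∈ w a_{r+1}^*`,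
`top` for `z ∈ a_{r+1}^+ w a_{r+1}^*`, and `zero` once two blocks of old letters are separated
by `a_{r+1}`. -/
inductive LastColumnForm : Matrix ((Fin 1 ⊕ Fin n) ⊕ Fin 1) (Fin 1) S → Prop
  | basis : LastColumnForm (lastBasisColumn S n)
  | word {w : FreeMonoid (Fin r)} (hw : w ≠ 1) :
      LastColumnForm (fromRows (fromRows (α * μ w * β) (μ w * β)) 0)
  | top {w : FreeMonoid (Fin r)} (hw : w ≠ 1) :
      LastColumnForm (fromRows (fromRows (α * μ w * β) 0) 0)
  | zero : LastColumnForm 0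

theorem LastColumnForm.scalToMatGen_mul {c : Matrix ((Fin 1 ⊕ Fin n) ⊕ Fin 1) (Fin 1) S}
    (hc : LastColumnForm μ α β c) (i : Fin (r + 1)) :
    LastColumnForm μ α β (scalToMatGen μ α β i * c) := by
  induction i using Fin.lastCases with
  | last =>
    rw [scalToMatGen_last]
    cases hc with
    | basis => simpa [lastBasisColumn, fromBlocks_mul_fromRows] using .basis
    | word hw | top hw => simpa [fromBlocks_mul_fromRows] using .top hw
    | zero => simpa using .zero
  | cast j =>
    rw [scalToMatGen_castSucc, cornerBlk]
    cases hc with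
    | basis =>
      simpa [lastBasisColumn, fromBlocks_mul_fromRows] using .word (FreeMonoid.of_ne_one j)
    | @word w hw =>
      have hjw := LastColumnForm.word (μ := μ) (α := α) (β := β)
        (FreeMonoid.of_mul_ne_one j w)
      rw [map_mul] at hjw
      simpa [fromBlocks_mul_fromRows, Matrix.mul_assoc] using hjw
    | top hw => simpa [fromBlocks_mul_fromRows] using .zero
    | zero => simpa using .zero

variable (μ α β) in
theorem lastColumnForm_lift_mul (z : FreeMonoid (Fin (r + 1))) :
    LastColumnForm μ α β (FreeMonoid.lift (scalToMatGen μ α β) z * lastBasisColumn S n) := by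
  induction z using FreeMonoid.inductionOn' with
  | one => rw [map_one, Matrix.one_mul]; exact .basis
  | of_mul i z ih =>
    rw [map_mul, FreeMonoid.lift_eval_of, Matrix.mul_assoc]
    exact ih.scalToMatGen_mul i

theorem LastColumnForm.apply_top {c : Matrix ((Fin 1 ⊕ Fin n) ⊕ Fin 1) (Fin 1) S}
    (hc : LastColumnForm μ α β c) :
    c (.inl (.inl 0)) 0 = 0 ∨ ∃ w ≠ 1, (α * μ w * β) 0 0 = c (.inl (.inl 0)) 0 := by
  cases hc with
  | basis | zero => exact .inl rfl
  | word hw | top hw => exact .inr ⟨_, hw, rfl⟩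

end ScalarToMatrix

theorem scalar_to_matrix_general {S : Type*} [Semiring S] {r n : ℕ}
    (μ : FreeMonoid (Fin r) →* Matrix (Fin n) (Fin n) S)
    (α : Matrix (Fin 1) (Fin n) S) (β : Matrix (Fin n) (Fin 1) S)
    (γ : S) (hγ : γ ≠ 0) :
    (∃ w : FreeMonoid (Fin r), w ≠ 1 ∧ (α * μ w * β) 0 0 = γ) ↔
    (∃ z : FreeMonoid (Fin (r + 1)), z ≠ 1 ∧
      FreeMonoid.lift (scalToMatGen μ α β) z = cornerTarget n γ) := by
  constructor
  · rintro ⟨w, hw, rfl⟩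
    refine ⟨.of (Fin.last r) * .map Fin.castSucc w * .of (Fin.last r),
      by simpa only [mul_assoc] using FreeMonoid.of_mul_ne_one _ _, ?_⟩
    rw [map_mul, map_mul, FreeMonoid.lift_eval_of, lift_scalToMatGen_map_castSucc hw,
      scalToMatGen_last_mul_cornerBlk_mul]
  · rintro ⟨z, -, hz⟩
    have htop := (lastColumnForm_lift_mul μ α β z).apply_top
    simp only [mul_lastBasisColumn_apply, hz, cornerTarget, of_apply, and_self,
      if_true] at htop
    exact htop.resolve_left hγ

/-- Equivalence (4.28): for `γ ≠ 0` and `n ≥ 1`,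
`∃ w ∈ Σ_r^+, αμ(w)β = γ` iff `∃ z ∈ Σ_{r+1}^+, μ'(z) = M_γ`. -/
theorem scalar_to_matrix {S : Type*} [Semiring S] {r n : ℕ} (hn : 1 ≤ n)
    (μ : FreeMonoid (Fin r) →* Matrix (Fin n) (Fin n) S)
    (α : Matrix (Fin 1) (Fin n) S) (β : Matrix (Fin n) (Fin 1) S)
    (γ : S) (hγ : γ ≠ 0) :
    (∃ w : FreeMonoid (Fin r), w ≠ 1 ∧ (α * μ w * β) 0 0 = γ) ↔
    (∃ z : FreeMonoid (Fin (r + 1)), z ≠ 1 ∧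
      FreeMonoid.lift (scalToMatGen μ α β) z = cornerTarget n γ) :=
  scalar_to_matrix_general μ α β γ hγ
end
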